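/- Let n, p ≥ 1, let t₀ ≤ t_f be real numbers, and let A : ℝ → ℝ^{n×n} and B : ℝ → ℝ^{n×p} be continuous on [t₀, t_f]. Suppose s : ℝ → ℝ^{n×p} is differentiable on [t₀, t_f] with s(t₀) = 0 and s'(t) = A(t)·s(t) + B(t) for all t ∈ [t₀, t_f], and a : ℝ → ℝⁿ is differentiable on [t₀, t_f] with a'(t) = −A(t)ᵀ·a(t) for all t ∈ [t₀, t_f]. Then a(t_f)ᵀ·s(t_f) = ∫_{t₀}^{t_f} a(t)ᵀ·B(t) dt (an identity in ℝ^{1×p}). -/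

import Mathlib

attribute [local instance] Matrix.normedAddCommGroup Matrix.normedSpace

/-! The pairing `a(t)ᵀ s(t)` has derivative `-(Aᵀ a)ᵀ s + aᵀ (A s + B) = aᵀ B`: the adjoint
equation is exactly what cancels the `A s` term. The identity is then the fundamental theorem of
calculus, the boundary term at `t₀` vanishing because `s(t₀) = 0`. -/

open Set MeasureTheory Matrix

section Bilinear

variable {𝕜 : Type*} [NontriviallyNormedField 𝕜] [CompleteSpace 𝕜] {m n : Type*}
  [Fintype m] [Fintype n]

theorem HasDerivWithinAt.vecMul {a : 𝕜 → m → 𝕜} {M : 𝕜 → Matrix m n 𝕜} {a' : m → 𝕜}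
    {M' : Matrix m n 𝕜} {S : Set 𝕜} {t : 𝕜} (ha : HasDerivWithinAt a a' S t)
    (hM : HasDerivWithinAt M M' S t) :
    HasDerivWithinAt (fun t ↦ a t ᵥ* M t) (a' ᵥ* M t + a t ᵥ* M') S t := by
  rw [add_comm]
  exact (vecMulBilin 𝕜 𝕜 : (m → 𝕜) →ₗ[𝕜] Matrix m n 𝕜 →ₗ[𝕜] n → 𝕜).toContinuousBilinearMap
    |>.hasDerivWithinAt_of_bilinear ha hM

theorem ContinuousOn.vecMul {X : Type*} [TopologicalSpace X] {a : X → m → 𝕜}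
    {M : X → Matrix m n 𝕜} {S : Set X} (ha : ContinuousOn a S) (hM : ContinuousOn M S) :
    ContinuousOn (fun x ↦ a x ᵥ* M x) S :=
  (vecMulBilin 𝕜 𝕜 : (m → 𝕜) →ₗ[𝕜] Matrix m n 𝕜 →ₗ[𝕜] n → 𝕜).toContinuousBilinearMap
    |>.continuous₂.comp_continuousOn (ha.prodMk hM)

end Bilinear

theorem Matrix.neg_transpose_mulVec_vecMul_add {R : Type*} [CommRing R] {n p : Type*}
    [Fintype n] (A : Matrix n n R) (B s : Matrix n p R) (a : n → R) :
    -(Aᵀ *ᵥ a) ᵥ* s + a ᵥ* (A * s + B) = a ᵥ* B := by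
  rw [mulVec_transpose, neg_vecMul, vecMul_vecMul, vecMul_add]
  abel

theorem intervalIntegral.integral_eq_sub_of_hasDerivWithinAt_Icc {E : Type*}
    [NormedAddCommGroup E] [NormedSpace ℝ E] [CompleteSpace E] {f f' : ℝ → E} {a b : ℝ}
    (hab : a ≤ b) (hf : ∀ t ∈ Icc a b, HasDerivWithinAt f (f' t) (Icc a b) t)
    (hint : IntervalIntegrable f' volume a b) : ∫ t in a..b, f' t = f b - f a :=
  integral_eq_sub_of_hasDerivAt_of_le hab (fun t ht ↦ (hf t ht).continuousWithinAt)
    (fun t ht ↦ (hf t (Ioo_subset_Icc_self ht)).hasDerivAt (Icc_mem_nhds ht.1 ht.2)) hint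

theorem stmt_8_general (n p : ℕ) (t₀ tf : ℝ) (ht : t₀ ≤ tf)
    (A : ℝ → Matrix (Fin n) (Fin n) ℝ) (B : ℝ → Matrix (Fin n) (Fin p) ℝ)
    (hB : ContinuousOn B (Set.Icc t₀ tf))
    (s : ℝ → Matrix (Fin n) (Fin p) ℝ) (hs0 : s t₀ = 0)
    (hs : ∀ t ∈ Set.Icc t₀ tf, HasDerivWithinAt s (A t * s t + B t) (Set.Icc t₀ tf) t)
    (a : ℝ → Fin n → ℝ)
    (ha : ∀ t ∈ Set.Icc t₀ tf,
      HasDerivWithinAt a (-(Matrix.mulVec (Matrix.transpose (A t)) (a t)))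
        (Set.Icc t₀ tf) t) :
    Matrix.vecMul (a tf) (s tf) = ∫ t in t₀..tf, Matrix.vecMul (a t) (B t) := by
  have hpairing : ∀ t ∈ Icc t₀ tf,
      HasDerivWithinAt (fun t ↦ a t ᵥ* s t) (a t ᵥ* B t) (Icc t₀ tf) t := fun t htI ↦ by
    simpa only [neg_transpose_mulVec_vecMul_add] using (ha t htI).vecMul (hs t htI)
  have hint : IntervalIntegrable (fun t ↦ a t ᵥ* B t) volume t₀ tf :=
    (ContinuousOn.vecMul (fun t htI ↦ (ha t htI).continuousWithinAt) hB).intervalIntegrable_of_Icc ht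
  rw [intervalIntegral.integral_eq_sub_of_hasDerivWithinAt_Icc ht hpairing hint, hs0, vecMul_zero,
    sub_zero]

/-- If `s` solves the variational equation `s' = A s + B` on `[t₀, t_f]` with `s(t₀) = 0`
and `a` solves the adjoint equation `a' = −Aᵀ a`, then
`a(t_f)ᵀ s(t_f) = ∫_{t₀}^{t_f} a(t)ᵀ B(t) dt`. -/
theorem stmt_8 (n p : ℕ) (hn : 1 ≤ n) (hp : 1 ≤ p) (t₀ tf : ℝ) (ht : t₀ ≤ tf)
    (A : ℝ → Matrix (Fin n) (Fin n) ℝ) (B : ℝ → Matrix (Fin n) (Fin p) ℝ)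
    (hA : ContinuousOn A (Set.Icc t₀ tf)) (hB : ContinuousOn B (Set.Icc t₀ tf))
    (s : ℝ → Matrix (Fin n) (Fin p) ℝ) (hs0 : s t₀ = 0)
    (hs : ∀ t ∈ Set.Icc t₀ tf, HasDerivWithinAt s (A t * s t + B t) (Set.Icc t₀ tf) t)
    (a : ℝ → Fin n → ℝ)
    (ha : ∀ t ∈ Set.Icc t₀ tf,
      HasDerivWithinAt a (-(Matrix.mulVec (Matrix.transpose (A t)) (a t)))
        (Set.Icc t₀ tf) t) :
    Matrix.vecMul (a tf) (s tf) = ∫ t in t₀..tf, Matrix.vecMul (a t) (B t) :=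
  stmt_8_general n p t₀ tf ht A B hB s hs0 hs a ha
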